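/- Meixner polynomials M_n associated with the geometric distribution μ(x) = (1−p)p^x on ℕ (0 < p < 1), defined by M₀ = 1, M₁(x) = 1 − p − x/p (up to normalization) and the recurrence (p/(1−p)) M_{n+1}(x) = ((p−1)x + (1+p)n + p) M_n(x) − (1−p) n² M_{n−1}(x), are orthogonal: for m ≠ n, ∑_{x=0}^∞ M_m(x) M_n(x) (1−p) p^x = 0. -/

import Mathlib

/-! The Meixner polynomials are eigenfunctions of the difference operator
`L f(x) = p(x+1) f(x+1) + x f(x-1) - (x + p(x+1)) f(x)`, with eigenvalue `n(p-1)` for `M_n`.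
Summation by parts shows that `L` is symmetric with respect to the weight `p^x` on `ℕ`, so
eigenfunctions for distinct eigenvalues are orthogonal. -/

open Polynomial

/-- The Meixner polynomials associated with the geometric distribution
`μ(x) = (1−p)p^x` on `ℕ`: `M₀ = 1`, `M₁` determined by the recurrence
`(p/(1−p)) M_{n+1}(x) = ((p−1)x + (1+p)n + p) M_n(x) − (1−p) n² M_{n−1}(x)`. -/
noncomputable def meixner (p : ℝ) : ℕ → Polynomial ℝ
  | 0 => 1
  | 1 => C ((1 - p) / p) * (C (p - 1) * X + C p)
  | (n + 2) =>
      C ((1 - p) / p) *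
        ((C (p - 1) * X + C ((1 + p) * ((n : ℝ) + 1) + p)) * meixner p (n + 1)
          - C ((1 - p) * ((n : ℝ) + 1) ^ 2) * meixner p n)

theorem summable_eval_mul_geometric {R : Type*} [NormedCommRing R] [HasSummableGeomSeries R]
    {r : R} (hr : ‖r‖ < 1) (q : R[X]) :
    Summable (fun n : ℕ => q.eval (n : R) * r ^ n) := by
  induction q using Polynomial.induction_on' with
  | add f g hf hg => simpa only [eval_add, add_mul] using hf.add hg
  | monomial k a =>
    simpa only [eval_monomial, mul_assoc] using
      (summable_pow_mul_geometric_of_norm_lt_one k hr).mul_left a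

theorem tsum_sub_succ_eq_zero {G : Type*} [AddCommGroup G] [TopologicalSpace G]
    [IsTopologicalAddGroup G] [T2Space G] {d : ℕ → G} (hd : Summable d) (h0 : d 0 = 0) :
    ∑' n : ℕ, (d (n + 1) - d n) = 0 := by
  rw [((summable_nat_add_iff 1).mpr hd).tsum_sub hd, hd.tsum_eq_zero_add, h0, zero_add, sub_self]

section

variable {p : ℝ}

theorem mul_eval_meixner_succ (hp : p ≠ 0) (n : ℕ) (x : ℝ) :
    p * (meixner p (n + 1)).eval x
      = (1 - p) * (((p - 1) * x + (1 + p) * n + p) * (meixner p n).eval x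
          - (1 - p) * n ^ 2 * (meixner p (n - 1)).eval x) := by
  cases n with
  | zero =>
    simp only [meixner, eval_mul, eval_add, eval_C, eval_X, eval_one]
    field_simp
    ring
  | succ n =>
    simp only [meixner, eval_mul, eval_add, eval_sub, eval_C, eval_X, Nat.add_sub_cancel]
    push_cast
    field_simp
    ring

noncomputable def meixnerOperator (p : ℝ) (f : ℝ[X]) : ℝ[X] :=
  C p * (X + 1) * f.comp (X + 1) + X * f.comp (X - 1) - (X + C p * (X + 1)) * f

@[simp]
theorem eval_meixnerOperator (f : ℝ[X]) (x : ℝ) :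
    (meixnerOperator p f).eval x
      = p * (x + 1) * f.eval (x + 1) + x * f.eval (x - 1) - (x + p * (x + 1)) * f.eval x := by
  simp [meixnerOperator]

/-- The second identity is the companion needed to carry the first through the induction. -/
theorem eval_meixner_shifts (hp : p ≠ 0) (n : ℕ) (x : ℝ) :
    p * (x + 1) * (meixner p n).eval (x + 1) + x * (meixner p n).eval (x - 1)
        = (x + p * (x + 1) + n * (p - 1)) * (meixner p n).eval x
      ∧ p * (x + 1) * (meixner p n).eval (x + 1) - x * (meixner p n).eval (x - 1)
        = ((p - 1) * x + (1 + p) * n + p) * (meixner p n).eval x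
          - 2 * (1 - p) * n ^ 2 * (meixner p (n - 1)).eval x := by
  induction n using Nat.strong_induction_on generalizing x with
  | _ n ih =>
    match n with
    | 0 =>
      simp only [meixner, eval_one]
      constructor <;> ring
    | 1 =>
      simp only [meixner, Nat.sub_self, eval_mul, eval_add, eval_C, eval_X, eval_one]
      constructor <;> field_simp <;> ring
    | n + 2 =>
      obtain ⟨h1, h2⟩ := ih (n + 1) (by omega) x
      obtain ⟨h3, h4⟩ := ih n (by omega) x
      have ha := mul_eval_meixner_succ hp (n + 1) (x + 1)
      have hb := mul_eval_meixner_succ hp (n + 1) x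
      have hc := mul_eval_meixner_succ hp (n + 1) (x - 1)
      have hr := mul_eval_meixner_succ hp n x
      simp only [Nat.add_sub_cancel] at h2 ha hb hc ⊢
      push_cast at h1 h2 h3 h4 ha hb hc hr ⊢
      constructor
      · refine mul_left_cancel₀ hp ?_
        linear_combination (p * (x + 1)) * ha + x * hc
          - (x + p * (x + 1) + (n + 2) * (p - 1)) * hb
          + (1 - p) * ((p - 1) * x + ((1 + p) * (n + 1) + p)) * h1
          + (1 - p) * (p - 1) * h2
          - (1 - p) ^ 2 * (n + 1) ^ 2 * h3
      · refine mul_left_cancel₀ hp ?_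
        linear_combination (p * (x + 1)) * ha - x * hc
          - ((p - 1) * x + (1 + p) * (n + 2) + p) * hb
          + ((1 - p) * (p - 1) * x + (1 - p) ^ 2 * (x - 1)) * h1
          + ((1 - p) * ((p - 1) * x + (1 + p) * (n + 1) + 2 * p - 1) + (1 - p) ^ 2) * h2
          - (1 - p) ^ 2 * (n + 1) ^ 2 * h4
          + 2 * (1 - p) * (n + 1) ^ 2 * hr

theorem meixnerOperator_meixner (hp : p ≠ 0) (n : ℕ) :
    meixnerOperator p (meixner p n) = C (n * (p - 1)) * meixner p n := by
  refine Polynomial.funext fun x => ?_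
  rw [eval_meixnerOperator, eval_mul, eval_C, (eval_meixner_shifts hp n x).1]
  ring

theorem tsum_meixnerOperator_mul_sub_mul_meixnerOperator (hp : |p| < 1) (f g : ℝ[X]) :
    ∑' x : ℕ, ((meixnerOperator p f).eval (x : ℝ) * g.eval (x : ℝ)
      - f.eval (x : ℝ) * (meixnerOperator p g).eval (x : ℝ)) * p ^ x = 0 := by
  let d : ℕ → ℝ := fun x => x * (f.eval (x : ℝ) * g.eval (x - 1 : ℝ)
    - f.eval (x - 1 : ℝ) * g.eval (x : ℝ)) * p ^ x
  have hd : Summable d := by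
    refine (summable_eval_mul_geometric (by rwa [Real.norm_eq_abs])
      (X * (f * g.comp (X - 1) - f.comp (X - 1) * g))).congr fun x => ?_
    simp [d, mul_assoc]
  rw [← tsum_sub_succ_eq_zero hd (by simp [d])]
  refine tsum_congr fun x => ?_
  simp only [eval_meixnerOperator, d, Nat.cast_succ, add_sub_cancel_right]
  ring

theorem tsum_mul_geometric_eq_zero_of_meixnerOperator_eq (hp : |p| < 1) {f g : ℝ[X]} {a b : ℝ}
    (hab : a ≠ b) (hf : meixnerOperator p f = C a * f) (hg : meixnerOperator p g = C b * g) :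
    ∑' x : ℕ, f.eval (x : ℝ) * g.eval (x : ℝ) * p ^ x = 0 := by
  refine (mul_eq_zero.mp ?_).resolve_left (sub_ne_zero.mpr hab)
  rw [← tsum_mul_left, ← tsum_meixnerOperator_mul_sub_mul_meixnerOperator hp f g, hf, hg]
  exact tsum_congr fun x => by simp only [eval_mul, eval_C]; ring

end

/-- The Meixner polynomials are orthogonal with respect to the geometric
distribution `(1−p)p^x` on `ℕ`: for `m ≠ n`,
`∑_{x=0}^∞ M_m(x) M_n(x) (1−p) p^x = 0`. -/
theorem meixner_orthogonal (p : ℝ) (hp0 : 0 < p) (hp1 : p < 1)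
    {m n : ℕ} (hmn : m ≠ n) :
    ∑' x : ℕ, (meixner p m).eval (x : ℝ) * (meixner p n).eval (x : ℝ)
      * (1 - p) * p ^ x = 0 := by
  have hS := tsum_mul_geometric_eq_zero_of_meixnerOperator_eq (abs_lt.mpr ⟨by linarith, hp1⟩)
    (mul_right_cancel₀ (sub_ne_zero.mpr hp1.ne) |>.mt (Nat.cast_injective.ne hmn))
    (meixnerOperator_meixner hp0.ne' m) (meixnerOperator_meixner hp0.ne' n)
  calc _ = (1 - p) * ∑' x : ℕ, (meixner p m).eval (x : ℝ) * (meixner p n).eval (x : ℝ)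
        * p ^ x := by
        rw [← tsum_mul_left]
        exact tsum_congr fun x => by ring
    _ = 0 := by rw [hS, mul_zero]
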